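/- The Poincaré series of L_∞ = lim L_n (graded with deg a_i = 1, deg b_i = 2) equals the Poincaré series of the polynomial ring F_2[v_1, v_2, v_3, ...] with deg v_i = i; equivalently, the dimension of the degree-d part of L_∞ is the number of partitions of d. -/

import Mathlib

open MvPolynomial

/-- The ideal generated by the squares of the `a`-variables (indexed by `Sum.inl`); the
quotient is `K_n = Λ_{F₂}(a_1,…,a_n) ⊗ F₂[b_1,…,b_n]` (char 2), with the `b`-variables
indexed by `Sum.inr`. -/
noncomputable def sqIdealK (n : ℕ) : Ideal (MvPolynomial (Fin n ⊕ Fin n) (ZMod 2)) :=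
  Ideal.span (Set.range fun i : Fin n =>
    (X (Sum.inl i) : MvPolynomial (Fin n ⊕ Fin n) (ZMod 2)) ^ 2)

/-- `K_n = Λ_{F₂}(a_1,…,a_n) ⊗ F₂[b_1,…,b_n]`. -/
noncomputable abbrev Kn (n : ℕ) : Type :=
  MvPolynomial (Fin n ⊕ Fin n) (ZMod 2) ⧸ sqIdealK n

/-- The action of `g ∈ Σ_n` on `K_n`, permuting the `a`'s and `b`'s simultaneously. -/
noncomputable def permActK (n : ℕ) (g : Equiv.Perm (Fin n)) : Kn n →ₐ[ZMod 2] Kn n :=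
  Ideal.Quotient.liftₐ (sqIdealK n)
    ((Ideal.Quotient.mkₐ (ZMod 2) (sqIdealK n)).comp
      (rename (Sum.map g g) : _ →ₐ[ZMod 2] _))
    (by
      intro a ha
      refine Submodule.span_induction ?_ ?_ ?_ ?_ ha
      · rintro _ ⟨i, rfl⟩
        rw [AlgHom.comp_apply, map_pow, rename_X, Ideal.Quotient.mkₐ_eq_mk,
          Ideal.Quotient.eq_zero_iff_mem]
        exact Ideal.subset_span ⟨g i, rfl⟩
      · exact map_zero _
      · intro x y _ _ hx hy; rw [map_add, hx, hy, add_zero]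
      · intro c x _ hx; rw [smul_eq_mul, map_mul, hx, mul_zero])

/-- `L_n = K_n^{Σ_n}`, the subalgebra of invariants. -/
noncomputable def Ln (n : ℕ) : Subalgebra (ZMod 2) (Kn n) where
  carrier := {x | ∀ g : Equiv.Perm (Fin n), permActK n g x = x}
  add_mem' := fun hx hy => by intro g; rw [map_add, hx g, hy g]
  mul_mem' := fun hx hy => by intro g; rw [map_mul, hx g, hy g]
  algebraMap_mem' := fun r g => (permActK n g).commutes r

/-- The orbit sum `[m]` of a monomial (given by its exponent vector `μ`): the sum over the
`Σ_n`-orbit of `m`, each distinct monomial appearing exactly once. -/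
noncomputable def orbitSum (n : ℕ) (μ : (Fin n ⊕ Fin n) →₀ ℕ) : Kn n :=
  Ideal.Quotient.mk (sqIdealK n)
    (∑ ν ∈ Finset.image
        (fun g : Equiv.Perm (Fin n) => Finsupp.equivMapDomain (Equiv.sumCongr g g) μ)
        Finset.univ,
      monomial ν (1 : ZMod 2))

/-- The augmentation `K_n → F₂` sending all variables to zero. -/
noncomputable def augK (n : ℕ) : Kn n →ₐ[ZMod 2] ZMod 2 :=
  Ideal.Quotient.liftₐ (sqIdealK n) (aeval 0)
    (by
      intro a ha
      refine Submodule.span_induction ?_ ?_ ?_ ?_ ha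
      · rintro _ ⟨i, rfl⟩
        simp
      · exact map_zero _
      · intro x y _ _ hx hy; rw [map_add, hx, hy, add_zero]
      · intro c x _ hx; rw [smul_eq_mul, map_mul, hx, mul_zero])

/-- The augmentation ideal `I ⊆ L_n`. -/
noncomputable def augIdealL (n : ℕ) : Ideal (Ln n) :=
  RingHom.ker (((augK n).comp (Ln n).val : Ln n →ₐ[ZMod 2] ZMod 2) : Ln n →+* ZMod 2)

/-- The degree-`d` homogeneous component of `K_n`, for the grading with `deg aᵢ = 1`,
`deg bᵢ = 2`: the span of (images of) monomials of weighted degree `d`. -/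
noncomputable def degComp (n d : ℕ) : Submodule (ZMod 2) (Kn n) :=
  Submodule.span (ZMod 2)
    {x | ∃ μ : (Fin n ⊕ Fin n) →₀ ℕ,
      ((∑ i : Fin n, μ (Sum.inl i)) + 2 * ∑ i : Fin n, μ (Sum.inr i)) = d ∧
      x = Ideal.Quotient.mk (sqIdealK n) (monomial μ (1 : ZMod 2))}

/-! Modulo the squares `a_i ^ 2`, the monomials squarefree in the `a`'s form a basis of `K_n`,
which `Σ_n` permutes; so the invariants of degree `d` have a basis of orbit sums of such
monomials, and it remains to count their orbits. Such a monomial is a product of pure factors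
`a_i ^ ε * b_i ^ k` (`ε ≤ 1`), and a pure factor is determined by its degree `m = ε + 2k`.
Hence the monomials correspond to tuples in `ℕⁿ`, their orbits of degree `d` to multisets of
`n` naturals summing to `d`, and, dropping the zeros, to partitions of `d`: every partition
arises, since it has at most `d ≤ n` parts. -/

open Finsupp

theorem Multiset.eq_of_card_eq_of_filter_ne_zero_eq {s t : Multiset ℕ}
    (hcard : Multiset.card s = Multiset.card t)
    (h : s.filter (· ≠ 0) = t.filter (· ≠ 0)) : s = t := by
  have hsplit (u : Multiset ℕ) : u = u.filter (· ≠ 0) +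
      Multiset.replicate (Multiset.card u - Multiset.card (u.filter (· ≠ 0))) 0 := by
    conv_lhs => rw [← Multiset.filter_add_not (· ≠ 0) u]
    congr 1
    rw [Multiset.eq_replicate]
    refine ⟨?_, fun b hb => by simpa using Multiset.of_mem_filter hb⟩
    have hcard := congrArg Multiset.card (Multiset.filter_add_not (· ≠ 0) u)
    rw [Multiset.card_add] at hcard
    omega
  rw [hsplit s, hsplit t, h, hcard]

theorem Fin.exists_univ_map_eq {α : Type*} {n : ℕ} (s : Multiset α) (h : Multiset.card s = n) :
    ∃ f : Fin n → α, Finset.univ.val.map f = s := by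
  subst h
  refine ⟨fun i => s.toList.get (i.cast (Multiset.length_toList s).symm), ?_⟩
  rw [Fin.univ_val_map, ← List.ofFn_congr (Multiset.length_toList s) s.toList.get, List.ofFn_get,
    Multiset.coe_toList]

theorem Fin.exists_perm_comp_eq {α : Type*} [LinearOrder α] {n : ℕ} {f f' : Fin n → α}
    (h : Finset.univ.val.map f = Finset.univ.val.map f') :
    ∃ g : Equiv.Perm (Fin n), f ∘ g = f' := by
  have hperm : (List.ofFn f).Perm (List.ofFn f') := by
    rwa [← Multiset.coe_eq_coe, ← Fin.univ_val_map, ← Fin.univ_val_map]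
  have hsorted : f ∘ Tuple.sort f = f' ∘ Tuple.sort f' :=
    List.ofFn_injective <| List.Perm.eq_of_sortedLE (Tuple.monotone_sort f).sortedLE_ofFn
      (Tuple.monotone_sort f').sortedLE_ofFn
      (((Tuple.sort f).ofFn_comp_perm f).trans
        (hperm.trans ((Tuple.sort f').ofFn_comp_perm f').symm))
  refine ⟨(Tuple.sort f').symm.trans (Tuple.sort f), funext fun i => ?_⟩
  simpa using congrFun hsorted ((Tuple.sort f').symm i)

theorem Nat.Partition.card_parts_le {d : ℕ} (π : Nat.Partition d) : Multiset.card π.parts ≤ d := by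
  simpa [π.parts_sum] using Multiset.card_nsmul_le_sum fun _ h => π.parts_pos h

namespace Kn

variable {n d : ℕ}

def IsAdmissible (μ : (Fin n ⊕ Fin n) →₀ ℕ) : Prop := ∀ i, μ (Sum.inl i) ≤ 1

lemma sqIdealK_eq_span_monomial :
    sqIdealK n = Ideal.span ((fun μ => monomial μ (1 : ZMod 2)) ''
      Set.range fun i : Fin n => single (Sum.inl i) 2) := by
  rw [sqIdealK, ← Set.range_comp]
  simp only [Function.comp_def, X_pow_eq_monomial]

lemma mem_sqIdealK_iff {p : MvPolynomial (Fin n ⊕ Fin n) (ZMod 2)} :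
    p ∈ sqIdealK n ↔ ∀ μ ∈ p.support, ¬ IsAdmissible μ := by
  simp [sqIdealK_eq_span_monomial, mem_ideal_span_monomial_image, IsAdmissible,
    Finsupp.single_le_iff, Nat.lt_iff_add_one_le]

lemma mk_monomial_eq_zero {μ : (Fin n ⊕ Fin n) →₀ ℕ} (hμ : ¬ IsAdmissible μ) :
    Ideal.Quotient.mk (sqIdealK n) (monomial μ (1 : ZMod 2)) = 0 := by
  rw [Ideal.Quotient.eq_zero_iff_mem, mem_sqIdealK_iff, support_monomial, if_neg one_ne_zero]
  simpa using hμ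

lemma eq_of_mk_eq_mk {p q : MvPolynomial (Fin n ⊕ Fin n) (ZMod 2)}
    (hp : ∀ μ ∈ p.support, IsAdmissible μ) (hq : ∀ μ ∈ q.support, IsAdmissible μ)
    (h : Ideal.Quotient.mk (sqIdealK n) p = Ideal.Quotient.mk (sqIdealK n) q) : p = q := by
  have hmem := mem_sqIdealK_iff.mp (Ideal.Quotient.eq.mp h)
  rw [← sub_eq_zero, ← MvPolynomial.support_eq_empty, Finset.eq_empty_iff_forall_notMem]
  intro μ hμ
  rcases Finset.mem_union.mp (support_sub _ p q hμ) with hμ' | hμ'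
  exacts [hmem μ hμ (hp μ hμ'), hmem μ hμ (hq μ hμ')]

def act (g : Equiv.Perm (Fin n)) (μ : (Fin n ⊕ Fin n) →₀ ℕ) : (Fin n ⊕ Fin n) →₀ ℕ :=
  equivMapDomain (Equiv.sumCongr g g) μ

lemma act_mul (g h : Equiv.Perm (Fin n)) (μ : (Fin n ⊕ Fin n) →₀ ℕ) :
    act (g * h) μ = act g (act h μ) := by
  ext (i | i) <;> rfl

@[simp] lemma act_one (μ : (Fin n ⊕ Fin n) →₀ ℕ) : act 1 μ = μ := by
  ext (i | i) <;> rfl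

lemma IsAdmissible.act {μ : (Fin n ⊕ Fin n) →₀ ℕ} (hμ : IsAdmissible μ)
    (g : Equiv.Perm (Fin n)) : IsAdmissible (act g μ) :=
  fun i => hμ (g.symm i)

lemma act_eq_mapDomain (g : Equiv.Perm (Fin n)) (μ : (Fin n ⊕ Fin n) →₀ ℕ) :
    act g μ = mapDomain (Sum.map g g) μ :=
  equivMapDomain_eq_mapDomain _ μ

lemma rename_monomial_eq_act (g : Equiv.Perm (Fin n)) (μ : (Fin n ⊕ Fin n) →₀ ℕ) (r : ZMod 2) :
    rename (Sum.map g g) (monomial μ r) = monomial (act g μ) r := by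
  rw [rename_monomial, act_eq_mapDomain]

lemma permActK_mk (g : Equiv.Perm (Fin n)) (p : MvPolynomial (Fin n ⊕ Fin n) (ZMod 2)) :
    permActK n g (Ideal.Quotient.mk (sqIdealK n) p) =
      Ideal.Quotient.mk (sqIdealK n) (rename (Sum.map g g) p) := rfl

/-- The degree of the pure factor `a_i ^ μ (inl i) * b_i ^ μ (inr i)`. -/
def pureDeg (μ : (Fin n ⊕ Fin n) →₀ ℕ) (i : Fin n) : ℕ := μ (Sum.inl i) + 2 * μ (Sum.inr i)

def degs (μ : (Fin n ⊕ Fin n) →₀ ℕ) : Multiset ℕ := Finset.univ.val.map (pureDeg μ)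

def totalDeg (μ : (Fin n ⊕ Fin n) →₀ ℕ) : ℕ :=
  (∑ i, μ (Sum.inl i)) + 2 * ∑ i, μ (Sum.inr i)

lemma card_degs (μ : (Fin n ⊕ Fin n) →₀ ℕ) : Multiset.card (degs μ) = n := by
  simp [degs]

lemma sum_degs (μ : (Fin n ⊕ Fin n) →₀ ℕ) : (degs μ).sum = totalDeg μ := by
  rw [degs, ← Finset.sum_eq_multiset_sum]
  simp [totalDeg, pureDeg, Finset.sum_add_distrib, Finset.mul_sum]

lemma degs_act (g : Equiv.Perm (Fin n)) (μ : (Fin n ⊕ Fin n) →₀ ℕ) :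
    degs (act g μ) = degs μ := by
  rw [degs, show pureDeg (act g μ) = pureDeg μ ∘ g.symm from rfl, ← Multiset.map_map,
    Multiset.map_univ_val_equiv, degs]

lemma totalDeg_act (g : Equiv.Perm (Fin n)) (μ : (Fin n ⊕ Fin n) →₀ ℕ) :
    totalDeg (act g μ) = totalDeg μ := by
  rw [← sum_degs, degs_act, sum_degs]

/-- `m = ε + 2k` with `ε ≤ 1` forces `ε = m % 2` and `k = m / 2`. -/
lemma IsAdmissible.ext {μ ν : (Fin n ⊕ Fin n) →₀ ℕ} (hμ : IsAdmissible μ) (hν : IsAdmissible ν)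
    (h : pureDeg μ = pureDeg ν) : μ = ν := by
  ext (i | i) <;> have := congrFun h i <;> have := hμ i <;> have := hν i <;>
    simp only [pureDeg] at * <;> omega

noncomputable def ofPureDegs (f : Fin n → ℕ) : (Fin n ⊕ Fin n) →₀ ℕ :=
  equivFunOnFinite.symm (Sum.elim (f · % 2) (f · / 2))

lemma isAdmissible_ofPureDegs (f : Fin n → ℕ) : IsAdmissible (ofPureDegs f) :=
  fun i => Nat.le_of_lt_succ (Nat.mod_lt (f i) two_pos)

lemma pureDeg_ofPureDegs (f : Fin n → ℕ) : pureDeg (ofPureDegs f) = f :=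
  funext fun i => Nat.mod_add_div (f i) 2

lemma exists_act_eq_of_degs_eq {μ ν : (Fin n ⊕ Fin n) →₀ ℕ} (hμ : IsAdmissible μ)
    (hν : IsAdmissible ν) (h : degs μ = degs ν) : ∃ g : Equiv.Perm (Fin n), act g μ = ν := by
  obtain ⟨g, hg⟩ := Fin.exists_perm_comp_eq h
  exact ⟨g⁻¹, (hμ.act g⁻¹).ext hν hg⟩

def orbit (μ : (Fin n ⊕ Fin n) →₀ ℕ) : Finset ((Fin n ⊕ Fin n) →₀ ℕ) :=
  Finset.univ.image fun g : Equiv.Perm (Fin n) => act g μ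

lemma mem_orbit {μ ν : (Fin n ⊕ Fin n) →₀ ℕ} : ν ∈ orbit μ ↔ ∃ g, act g μ = ν := by
  simp [orbit]

lemma image_act_orbit (g : Equiv.Perm (Fin n)) (μ : (Fin n ⊕ Fin n) →₀ ℕ) :
    (orbit μ).image (act g) = orbit μ := by
  ext ν
  simp only [Finset.mem_image, mem_orbit]
  constructor
  · rintro ⟨_, ⟨h, rfl⟩, rfl⟩
    exact ⟨g * h, act_mul g h μ⟩
  · rintro ⟨h, rfl⟩
    exact ⟨act (g⁻¹ * h) μ, ⟨_, rfl⟩, by rw [← act_mul, mul_inv_cancel_left]⟩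

noncomputable def orbitPoly (μ : (Fin n ⊕ Fin n) →₀ ℕ) : MvPolynomial (Fin n ⊕ Fin n) (ZMod 2) :=
  ∑ ν ∈ orbit μ, monomial ν 1

lemma orbitSum_eq_mk (μ : (Fin n ⊕ Fin n) →₀ ℕ) :
    orbitSum n μ = Ideal.Quotient.mk (sqIdealK n) (orbitPoly μ) := rfl

lemma coeff_orbitPoly (μ ν : (Fin n ⊕ Fin n) →₀ ℕ) :
    coeff ν (orbitPoly μ) = if ν ∈ orbit μ then 1 else 0 := by
  simp only [orbitPoly, coeff_sum, coeff_monomial, Finset.sum_ite_eq']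

lemma rename_orbitPoly (g : Equiv.Perm (Fin n)) (μ : (Fin n ⊕ Fin n) →₀ ℕ) :
    rename (Sum.map g g) (orbitPoly μ) = orbitPoly μ := by
  have hinj : Set.InjOn (act g) (orbit μ) := fun ν _ ν' _ h => by
    simpa [← act_mul] using congrArg (act g⁻¹) h
  rw [orbitPoly, map_sum]
  simp only [rename_monomial_eq_act]
  rw [← Finset.sum_image (f := fun ν => monomial ν (1 : ZMod 2)) hinj, image_act_orbit]

lemma orbitSum_mem_Ln (μ : (Fin n ⊕ Fin n) →₀ ℕ) : orbitSum n μ ∈ Ln n := fun g => by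
  rw [orbitSum_eq_mk, permActK_mk, rename_orbitPoly]

lemma orbitSum_mem_degComp {μ : (Fin n ⊕ Fin n) →₀ ℕ} (hμ : totalDeg μ = d) :
    orbitSum n μ ∈ degComp n d := by
  rw [orbitSum_eq_mk, orbitPoly, map_sum]
  refine Submodule.sum_mem _ fun ν hν => Submodule.subset_span ⟨ν, ?_, rfl⟩
  obtain ⟨g, rfl⟩ := mem_orbit.mp hν
  exact (totalDeg_act g μ).trans hμ

lemma degComp_le_map_restrictSupport : degComp n d ≤
    (restrictSupport (ZMod 2) {μ | IsAdmissible μ ∧ totalDeg μ = d}).map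
      (Ideal.Quotient.mkₐ (ZMod 2) (sqIdealK n)).toLinearMap := by
  refine Submodule.span_le.mpr ?_
  rintro _ ⟨μ, hμd, rfl⟩
  by_cases hμ : IsAdmissible μ
  · refine ⟨monomial μ 1, (mem_restrictSupport_iff _).mpr ?_, rfl⟩
    simpa [support_monomial] using ⟨hμ, hμd⟩
  · rw [SetLike.mem_coe, mk_monomial_eq_zero hμ]
    exact zero_mem _

lemma coeff_act_eq_of_mk_mem_Ln {p : MvPolynomial (Fin n ⊕ Fin n) (ZMod 2)}
    (hp : ∀ μ ∈ p.support, IsAdmissible μ) (hL : Ideal.Quotient.mk (sqIdealK n) p ∈ Ln n)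
    (g : Equiv.Perm (Fin n)) (μ : (Fin n ⊕ Fin n) →₀ ℕ) : coeff (act g μ) p = coeff μ p := by
  have hinj : Function.Injective (Sum.map g g) := Sum.map_injective.mpr ⟨g.injective, g.injective⟩
  have hrename : rename (Sum.map g g) p = p := by
    refine eq_of_mk_eq_mk ?_ hp (by rw [← permActK_mk, hL g])
    intro ν hν
    rw [support_rename_of_injective hinj] at hν
    obtain ⟨ν', hν', rfl⟩ := Finset.mem_image.mp hν
    rw [← act_eq_mapDomain]
    exact (hp ν' hν').act g
  calc coeff (act g μ) p = coeff (mapDomain (Sum.map g g) μ) (rename (Sum.map g g) p) := by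
        rw [hrename, act_eq_mapDomain]
    _ = coeff μ p := coeff_rename_mapDomain _ hinj p μ

noncomputable def toPartition {μ : (Fin n ⊕ Fin n) →₀ ℕ} (hμ : totalDeg μ = d) :
    Nat.Partition d :=
  Nat.Partition.ofSums d (degs μ) ((sum_degs μ).trans hμ)

lemma toPartition_eq_toPartition_iff {μ ν : (Fin n ⊕ Fin n) →₀ ℕ} (hμ : IsAdmissible μ)
    (hν : IsAdmissible ν) (hμd : totalDeg μ = d) (hνd : totalDeg ν = d) :
    toPartition hμd = toPartition hνd ↔ ν ∈ orbit μ := by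
  rw [mem_orbit]
  constructor
  · intro h
    refine exists_act_eq_of_degs_eq hμ hν (Multiset.eq_of_card_eq_of_filter_ne_zero_eq ?_ ?_)
    · rw [card_degs, card_degs]
    · simpa [toPartition, Nat.Partition.ext_iff] using h
  · rintro ⟨g, rfl⟩
    simp [toPartition, degs_act]

lemma exists_isAdmissible_degs_eq (hd : d ≤ n) (π : Nat.Partition d) :
    ∃ μ : (Fin n ⊕ Fin n) →₀ ℕ, IsAdmissible μ ∧
      degs μ = π.parts + Multiset.replicate (n - Multiset.card π.parts) 0 := by
  have hcard : Multiset.card (π.parts + Multiset.replicate (n - Multiset.card π.parts) 0) = n := by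
    have := π.card_parts_le
    simp only [Multiset.card_add, Multiset.card_replicate]
    omega
  obtain ⟨f, hf⟩ := Fin.exists_univ_map_eq _ hcard
  exact ⟨ofPureDegs f, isAdmissible_ofPureDegs f, by rw [degs, pureDeg_ofPureDegs, hf]⟩

noncomputable def rep (hd : d ≤ n) (π : Nat.Partition d) : (Fin n ⊕ Fin n) →₀ ℕ :=
  (exists_isAdmissible_degs_eq hd π).choose

variable (hd : d ≤ n)

lemma isAdmissible_rep (π : Nat.Partition d) : IsAdmissible (rep hd π) :=
  (exists_isAdmissible_degs_eq hd π).choose_spec.1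

lemma degs_rep (π : Nat.Partition d) :
    degs (rep hd π) = π.parts + Multiset.replicate (n - Multiset.card π.parts) 0 :=
  (exists_isAdmissible_degs_eq hd π).choose_spec.2

lemma totalDeg_rep (π : Nat.Partition d) : totalDeg (rep hd π) = d := by
  rw [← sum_degs, degs_rep, Multiset.sum_add, π.parts_sum, Multiset.sum_replicate, smul_zero,
    add_zero]

lemma toPartition_rep (π : Nat.Partition d) : toPartition (totalDeg_rep hd π) = π := by
  ext : 1
  rw [toPartition, Nat.Partition.ofSums_parts, degs_rep, Multiset.filter_add,
    Multiset.filter_eq_self.mpr fun _ h => (π.parts_pos h).ne',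
    Multiset.filter_eq_nil.mpr fun _ h => by simp [Multiset.eq_of_mem_replicate h], add_zero]

lemma mem_orbit_rep_iff {μ : (Fin n ⊕ Fin n) →₀ ℕ} (hμ : IsAdmissible μ) (hμd : totalDeg μ = d)
    (π : Nat.Partition d) : μ ∈ orbit (rep hd π) ↔ toPartition hμd = π := by
  rw [← toPartition_eq_toPartition_iff (isAdmissible_rep hd π) hμ (totalDeg_rep hd π) hμd,
    toPartition_rep, eq_comm]

lemma coeff_sum_smul_orbitPoly_rep (c : Nat.Partition d → ZMod 2) {μ : (Fin n ⊕ Fin n) →₀ ℕ}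
    (hμ : IsAdmissible μ) (hμd : totalDeg μ = d) :
    coeff μ (∑ π, c π • orbitPoly (rep hd π)) = c (toPartition hμd) := by
  simp only [coeff_sum, coeff_smul, coeff_orbitPoly, smul_eq_mul, mul_ite, mul_one, mul_zero,
    mem_orbit_rep_iff hd hμ hμd, Finset.sum_ite_eq, Finset.mem_univ, if_true]

lemma coeff_sum_smul_orbitPoly_rep_eq_zero (c : Nat.Partition d → ZMod 2)
    {μ : (Fin n ⊕ Fin n) →₀ ℕ} (hμ : ¬ (IsAdmissible μ ∧ totalDeg μ = d)) :
    coeff μ (∑ π, c π • orbitPoly (rep hd π)) = 0 := by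
  simp only [coeff_sum, coeff_smul, coeff_orbitPoly, smul_eq_mul, mul_ite, mul_one, mul_zero]
  refine Finset.sum_eq_zero fun π _ => if_neg fun hmem => hμ ?_
  obtain ⟨g, rfl⟩ := mem_orbit.mp hmem
  exact ⟨(isAdmissible_rep hd π).act g, (totalDeg_act g _).trans (totalDeg_rep hd π)⟩

lemma mk_sum_smul_orbitPoly_rep (c : Nat.Partition d → ZMod 2) :
    Ideal.Quotient.mk (sqIdealK n) (∑ π, c π • orbitPoly (rep hd π)) =
      ∑ π, c π • orbitSum n (rep hd π) := by
  simp only [orbitSum_eq_mk, ← Ideal.Quotient.mkₐ_eq_mk (ZMod 2), map_sum, map_smul]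

lemma linearIndependent_orbitSum_rep :
    LinearIndependent (ZMod 2) fun π : Nat.Partition d => orbitSum n (rep hd π) := by
  refine Fintype.linearIndependent_iff.mpr fun c hc π => ?_
  have hadm : ∀ μ ∈ (∑ π, c π • orbitPoly (rep hd π)).support, IsAdmissible μ := by
    intro μ hμ
    by_contra hμ'
    exact MvPolynomial.mem_support_iff.mp hμ
      (coeff_sum_smul_orbitPoly_rep_eq_zero hd c fun h => hμ' h.1)
  have hzero : ∑ π, c π • orbitPoly (rep hd π) = 0 :=
    eq_of_mk_eq_mk hadm (by simp) (by rw [mk_sum_smul_orbitPoly_rep, hc, map_zero])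
  have := coeff_sum_smul_orbitPoly_rep hd c (isAdmissible_rep hd π) (totalDeg_rep hd π)
  rwa [hzero, coeff_zero, toPartition_rep, eq_comm] at this

lemma eq_sum_smul_orbitPoly_rep_of_mk_mem_Ln {p : MvPolynomial (Fin n ⊕ Fin n) (ZMod 2)}
    (hp : (p.support : Set ((Fin n ⊕ Fin n) →₀ ℕ)) ⊆ {μ | IsAdmissible μ ∧ totalDeg μ = d})
    (hL : Ideal.Quotient.mk (sqIdealK n) p ∈ Ln n) :
    p = ∑ π, coeff (rep hd π) p • orbitPoly (rep hd π) := by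
  ext μ
  by_cases hμ : IsAdmissible μ ∧ totalDeg μ = d
  · rw [coeff_sum_smul_orbitPoly_rep hd _ hμ.1 hμ.2]
    obtain ⟨g, hg⟩ := mem_orbit.mp ((mem_orbit_rep_iff hd hμ.1 hμ.2 _).mpr rfl)
    have := coeff_act_eq_of_mk_mem_Ln (fun ν hν => (hp hν).1) hL g (rep hd (toPartition hμ.2))
    rwa [hg] at this
  · rw [coeff_sum_smul_orbitPoly_rep_eq_zero hd _ hμ, ← MvPolynomial.notMem_support_iff]
    exact fun h => hμ (hp h)

lemma inf_degComp_eq_span_orbitSum_rep : Subalgebra.toSubmodule (Ln n) ⊓ degComp n d =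
    Submodule.span (ZMod 2) (Set.range fun π : Nat.Partition d => orbitSum n (rep hd π)) := by
  refine le_antisymm (fun x hx => ?_) (Submodule.span_le.mpr ?_)
  · obtain ⟨hxL, hxd⟩ := Submodule.mem_inf.mp hx
    obtain ⟨p, hp, rfl⟩ := degComp_le_map_restrictSupport hxd
    rw [SetLike.mem_coe, mem_restrictSupport_iff] at hp
    refine (Submodule.mem_span_range_iff_exists_fun _).mpr ⟨fun π => coeff (rep hd π) p, ?_⟩
    exact (mk_sum_smul_orbitPoly_rep hd _).symm.trans
      (congrArg _ (eq_sum_smul_orbitPoly_rep_of_mk_mem_Ln hd hp hxL).symm)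
  · rintro _ ⟨π, rfl⟩
    exact Submodule.mem_inf.mpr ⟨orbitSum_mem_Ln _, orbitSum_mem_degComp (totalDeg_rep hd π)⟩

end Kn

/-- the Poincaré series of `L_∞` agrees with that of `F₂[v_1, v_2, …]` with
`deg vᵢ = i`; equivalently (via the stability isomorphism in degrees `≤ n`), for `d ≤ n` the
dimension of the degree-`d` part of `L_n` equals the number of partitions of `d`. -/
theorem stmt17 (n d : ℕ) (hd : d ≤ n) :
    Module.finrank (ZMod 2)
        ↥(Subalgebra.toSubmodule (Ln n) ⊓ degComp n d) =
      Fintype.card (Nat.Partition d) := by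
  rw [Kn.inf_degComp_eq_span_orbitSum_rep hd,
    finrank_span_eq_card (Kn.linearIndependent_orbitSum_rep hd)]
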